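/- Suppose that for both i = 1 and i = 2 one has D^{(ii)}(x,y) < 0 for every x ≠ y in ℝ^d and K^{(ii)}(x,x) = K^{(ii)}(y,y) for all x,y ∈ ℝ^d. Then every energy minimizer ρ_* is a pair of Dirac masses: there are ι_1, ι_2 with ρ_*^{(1)}(x_{ι_1}) = 1 and ρ_*^{(2)}(x_{ι_2}) = 1. If in addition D^{(12)}(x,y) < 0 for every x ≠ y, then every energy minimizer satisfies ι_1 = ι_2, i.e., both species are aggregated at the same vertex. -/
import Mathlib


open Finset

/-- The nonlocal cross-interaction energy on a finite graph with vertices `x`,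
vertex weights `μ`, kernels `K`, and two-species densities `ρ`. -/
noncomputable def energyGG {N d : ℕ} (x : Fin N → EuclideanSpace ℝ (Fin d)) (μ : Fin N → ℝ)
    (K : Fin 2 → Fin 2 → EuclideanSpace ℝ (Fin d) → EuclideanSpace ℝ (Fin d) → ℝ)
    (ρ : Fin 2 → Fin N → ℝ) : ℝ :=
  (1 / 2) * ∑ i : Fin 2, ∑ k : Fin 2, ∑ ι : Fin N, ∑ κ : Fin N,
    K i k (x ι) (x κ) * ρ i ι * ρ k κ * (μ ι * μ κ)

/-- A two-species distribution: nonnegative densities with total mass one for each species. -/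
def IsDistGG {N : ℕ} (μ : Fin N → ℝ) (ρ : Fin 2 → Fin N → ℝ) : Prop :=
  (∀ i ι, 0 ≤ ρ i ι) ∧ ∀ i, ∑ ι : Fin N, ρ i ι * μ ι = 1

lemma quad_single {N : ℕ} (f : Fin N → Fin N → ℝ) (u v : Fin N) :
    ∑ ι : Fin N, ∑ κ : Fin N, f ι κ * (if ι = u then (1:ℝ) else 0) * (if κ = v then 1 else 0)
      = f u v := by
  simp [mul_ite, ite_mul, Finset.sum_ite_eq']

lemma quad_ge {N : ℕ} (f : Fin N → Fin N → ℝ) (a b : Fin N → ℝ)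
    (ha : ∀ ι, 0 ≤ a ι) (hb : ∀ ι, 0 ≤ b ι)
    (hsa : ∑ ι, a ι = 1) (hsb : ∑ ι, b ι = 1)
    (c : ℝ) (hf : ∀ ι κ, c ≤ f ι κ) :
    c ≤ ∑ ι : Fin N, ∑ κ : Fin N, f ι κ * a ι * b κ := by
  have h1 : ∑ ι : Fin N, ∑ κ : Fin N, c * a ι * b κ = c := by
    calc ∑ ι : Fin N, ∑ κ : Fin N, c * a ι * b κ
        = ∑ ι : Fin N, (c * a ι) * ∑ κ, b κ := by
          simp [Finset.mul_sum]
      _ = c * ∑ ι, a ι := by rw [hsb]; simp [Finset.mul_sum]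
      _ = c := by rw [hsa, mul_one]
  rw [← h1]
  refine Finset.sum_le_sum fun ι _ => Finset.sum_le_sum fun κ _ => ?_
  exact mul_le_mul_of_nonneg_right (mul_le_mul_of_nonneg_right (hf ι κ) (ha ι)) (hb κ)

lemma quad_gt {N : ℕ} (f : Fin N → Fin N → ℝ) (a b : Fin N → ℝ)
    (ha : ∀ ι, 0 ≤ a ι) (hb : ∀ ι, 0 ≤ b ι)
    (hsa : ∑ ι, a ι = 1) (hsb : ∑ ι, b ι = 1)
    (c : ℝ) (hf : ∀ ι κ, c ≤ f ι κ)
    (ι₀ κ₀ : Fin N) (ha0 : 0 < a ι₀) (hb0 : 0 < b κ₀) (hs : c < f ι₀ κ₀) :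
    c < ∑ ι : Fin N, ∑ κ : Fin N, f ι κ * a ι * b κ := by
  have h1 : ∑ ι : Fin N, ∑ κ : Fin N, c * a ι * b κ = c := by
    calc ∑ ι : Fin N, ∑ κ : Fin N, c * a ι * b κ
        = ∑ ι : Fin N, (c * a ι) * ∑ κ, b κ := by
          simp [Finset.mul_sum]
      _ = c * ∑ ι, a ι := by rw [hsb]; simp [Finset.mul_sum]
      _ = c := by rw [hsa, mul_one]
  rw [← h1]
  have hle : ∀ ι κ : Fin N, c * a ι * b κ ≤ f ι κ * a ι * b κ := fun ι κ =>
    mul_le_mul_of_nonneg_right (mul_le_mul_of_nonneg_right (hf ι κ) (ha ι)) (hb κ)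
  refine Finset.sum_lt_sum (fun ι _ => Finset.sum_le_sum fun κ _ => hle ι κ)
    ⟨ι₀, Finset.mem_univ _, Finset.sum_lt_sum (fun κ _ => hle ι₀ κ)
      ⟨κ₀, Finset.mem_univ _, ?_⟩⟩
  have : 0 < a ι₀ * b κ₀ := mul_pos ha0 hb0
  nlinarith

noncomputable def diracPair {N : ℕ} (μ : Fin N → ℝ) (ι₁ ι₂ : Fin N) : Fin 2 → Fin N → ℝ :=
  fun i ι => if ι = (if i = 0 then ι₁ else ι₂) then (μ ι)⁻¹ else 0

lemma diracPair_dist {N : ℕ} (μ : Fin N → ℝ) (hμ : ∀ ι, 0 < μ ι) (ι₁ ι₂ : Fin N) :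
    IsDistGG μ (diracPair μ ι₁ ι₂) := by
  constructor
  · intro i ι
    by_cases h : ι = (if i = 0 then ι₁ else ι₂)
    · simp only [diracPair, h, if_pos]
      exact inv_nonneg.mpr (hμ _).le
    · simp [diracPair, h]
  · intro i
    simp only [diracPair, ite_mul, zero_mul]
    rw [Finset.sum_ite_eq']
    simp [(hμ _).ne']

lemma diracPair_mass {N : ℕ} (μ : Fin N → ℝ) (hμ : ∀ ι, 0 < μ ι) (ι₁ ι₂ : Fin N)
    (i : Fin 2) (ι : Fin N) :
    diracPair μ ι₁ ι₂ i ι * μ ι = if ι = (if i = 0 then ι₁ else ι₂) then 1 else 0 := by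
  by_cases h : ι = (if i = 0 then ι₁ else ι₂)
  · subst h
    simp only [diracPair, if_pos rfl]
    exact inv_mul_cancel₀ (hμ _).ne'
  · simp [diracPair, h]

/-- Theorem 3.1 c), attractive cross-interaction: if both self-interaction kernels have
negative differences `D^{(ii)}` off the diagonal and constant diagonals, then every energy
minimizer is a pair of Dirac masses; if moreover `D^{(12)} < 0` off the diagonal, the two
aggregation vertices coincide. -/
theorem aggregation_pair_of_diracs_same_vertex
    (N d : ℕ) (hN : 2 ≤ N) (hd : 1 ≤ d)
    (x : Fin N → EuclideanSpace ℝ (Fin d)) (hx : Function.Injective x)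
    (μ : Fin N → ℝ) (hμ : ∀ ι, 0 < μ ι)
    (K : Fin 2 → Fin 2 → EuclideanSpace ℝ (Fin d) → EuclideanSpace ℝ (Fin d) → ℝ)
    (hKcont : ∀ i k, Continuous fun p : EuclideanSpace ℝ (Fin d) × EuclideanSpace ℝ (Fin d) =>
      K i k p.1 p.2)
    (hKsym : ∀ i k p q, K i k p q = K i k q p)
    (hK12 : ∀ p q, K 0 1 p q = K 1 0 p q)
    (hDii : ∀ i : Fin 2, ∀ p q : EuclideanSpace ℝ (Fin d), p ≠ q → K i i p p - K i i p q < 0)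
    (hKdiag : ∀ i : Fin 2, ∀ p q : EuclideanSpace ℝ (Fin d), K i i p p = K i i q q)
    (ρs : Fin 2 → Fin N → ℝ)
    (hρs : IsDistGG μ ρs)
    (hmin : ∀ ρ, IsDistGG μ ρ → energyGG x μ K ρs ≤ energyGG x μ K ρ) :
    (∃ ι₁ ι₂ : Fin N,
      ρs 0 ι₁ * μ ι₁ = 1 ∧ ρs 1 ι₂ * μ ι₂ = 1 ∧
      (∀ ι, ι ≠ ι₁ → ρs 0 ι = 0) ∧ (∀ ι, ι ≠ ι₂ → ρs 1 ι = 0)) ∧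
    ((∀ p q : EuclideanSpace ℝ (Fin d), p ≠ q → K 0 1 p p - K 0 1 p q < 0) →
      ∀ ι₁ ι₂ : Fin N,
        (ρs 0 ι₁ * μ ι₁ = 1 ∧ ρs 1 ι₂ * μ ι₂ = 1 ∧
          (∀ ι, ι ≠ ι₁ → ρs 0 ι = 0) ∧ (∀ ι, ι ≠ ι₂ → ρs 1 ι = 0)) → ι₁ = ι₂) := by
  have hN0 : 0 < N := by omega
  set ι₀ : Fin N := ⟨0, hN0⟩ with hι₀
  set c : Fin 2 → ℝ := fun i => K i i (x ι₀) (x ι₀) with hc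
  -- energy expansion
  have hE : ∀ ρ : Fin 2 → Fin N → ℝ, energyGG x μ K ρ =
      (1/2) * ( (∑ ι : Fin N, ∑ κ : Fin N, K 0 0 (x ι) (x κ) * (ρ 0 ι * μ ι) * (ρ 0 κ * μ κ))
        + (∑ ι : Fin N, ∑ κ : Fin N, K 0 1 (x ι) (x κ) * (ρ 0 ι * μ ι) * (ρ 1 κ * μ κ))
        + (∑ ι : Fin N, ∑ κ : Fin N, K 1 0 (x ι) (x κ) * (ρ 1 ι * μ ι) * (ρ 0 κ * μ κ))
        + (∑ ι : Fin N, ∑ κ : Fin N, K 1 1 (x ι) (x κ) * (ρ 1 ι * μ ι) * (ρ 1 κ * μ κ)) ) := by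
    intro ρ
    have hterm : ∀ (i k : Fin 2),
        (∑ ι : Fin N, ∑ κ : Fin N, K i k (x ι) (x κ) * ρ i ι * ρ k κ * (μ ι * μ κ))
          = ∑ ι : Fin N, ∑ κ : Fin N, K i k (x ι) (x κ) * (ρ i ι * μ ι) * (ρ k κ * μ κ) :=
      fun i k => Finset.sum_congr rfl fun ι _ => Finset.sum_congr rfl fun κ _ => by ring
    unfold energyGG
    simp only [Fin.sum_univ_two, hterm]
    ring
  -- constant diagonal / off-diagonal strict
  have hdiag : ∀ (i : Fin 2) (ι : Fin N), K i i (x ι) (x ι) = c i := fun i ι => hKdiag i _ _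
  have hoffii : ∀ (i : Fin 2) (ι κ : Fin N), ι ≠ κ → c i < K i i (x ι) (x κ) := by
    intro i ι κ hne
    have hxne : x ι ≠ x κ := fun h => hne (hx h)
    have h1 := hDii i (x ι) (x κ) hxne
    have h2 := hdiag i ι
    linarith
  have hgeii : ∀ (i : Fin 2) (ι κ : Fin N), c i ≤ K i i (x ι) (x κ) := by
    intro i ι κ
    by_cases h : ι = κ
    · subst h; exact (hdiag i ι).ge
    · exact (hoffii i ι κ h).le
  -- minimizing cross pair
  obtain ⟨pq, -, hpq⟩ := Finset.exists_min_image (Finset.univ : Finset (Fin N × Fin N))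
    (fun p => K 0 1 (x p.1) (x p.2)) ⟨(ι₀, ι₀), Finset.mem_univ _⟩
  set m : ℝ := K 0 1 (x pq.1) (x pq.2) with hm
  have hmle : ∀ ι κ : Fin N, m ≤ K 0 1 (x ι) (x κ) := fun ι κ => hpq (ι, κ) (Finset.mem_univ _)
  -- energy of a dirac pair
  have hEd : ∀ u v : Fin N,
      energyGG x μ K (diracPair μ u v) = (1/2) * (c 0 + c 1) + K 0 1 (x u) (x v) := by
    intro u v
    have hm0 : ∀ ι, diracPair μ u v 0 ι * μ ι = if ι = u then (1:ℝ) else 0 := fun ι => by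
      rw [diracPair_mass μ hμ u v]; norm_num
    have hm1 : ∀ ι, diracPair μ u v 1 ι * μ ι = if ι = v then (1:ℝ) else 0 := fun ι => by
      rw [diracPair_mass μ hμ u v]; norm_num
    rw [hE]
    simp only [hm0, hm1]
    have q1 := quad_single (fun p q => K 0 0 (x p) (x q)) u u
    have q2 := quad_single (fun p q => K 0 1 (x p) (x q)) u v
    have q3 := quad_single (fun p q => K 1 0 (x p) (x q)) v u
    have q4 := quad_single (fun p q => K 1 1 (x p) (x q)) v v
    rw [q1, q2, q3, q4, hdiag 0 u, hdiag 1 v, ← hK12, hKsym]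
    ring
  -- lower bounds for the minimizer energy
  have hnn : ∀ (i : Fin 2) (ι : Fin N), 0 ≤ ρs i ι * μ ι :=
    fun i ι => mul_nonneg (hρs.1 i ι) (hμ ι).le
  have hQ00 : c 0 ≤ ∑ ι : Fin N, ∑ κ : Fin N,
      K 0 0 (x ι) (x κ) * (ρs 0 ι * μ ι) * (ρs 0 κ * μ κ) :=
    quad_ge _ _ _ (hnn 0) (hnn 0) (hρs.2 0) (hρs.2 0) _ (hgeii 0)
  have hQ11 : c 1 ≤ ∑ ι : Fin N, ∑ κ : Fin N,
      K 1 1 (x ι) (x κ) * (ρs 1 ι * μ ι) * (ρs 1 κ * μ κ) :=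
    quad_ge _ _ _ (hnn 1) (hnn 1) (hρs.2 1) (hρs.2 1) _ (hgeii 1)
  have hQ01 : m ≤ ∑ ι : Fin N, ∑ κ : Fin N,
      K 0 1 (x ι) (x κ) * (ρs 0 ι * μ ι) * (ρs 1 κ * μ κ) :=
    quad_ge _ _ _ (hnn 0) (hnn 1) (hρs.2 0) (hρs.2 1) _ hmle
  have hQ10eq : (∑ ι : Fin N, ∑ κ : Fin N,
      K 1 0 (x ι) (x κ) * (ρs 1 ι * μ ι) * (ρs 0 κ * μ κ))
      = ∑ ι : Fin N, ∑ κ : Fin N, K 0 1 (x ι) (x κ) * (ρs 0 ι * μ ι) * (ρs 1 κ * μ κ) := by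
    rw [Finset.sum_comm]
    exact Finset.sum_congr rfl fun κ _ => Finset.sum_congr rfl fun ι _ => by
      rw [← hK12, hKsym 0 1]; ring
  have hup := hmin (diracPair μ pq.1 pq.2) (diracPair_dist μ hμ pq.1 pq.2)
  rw [hEd, hE ρs, hQ10eq] at hup
  -- equalities
  have hQ00eq : (∑ ι : Fin N, ∑ κ : Fin N,
      K 0 0 (x ι) (x κ) * (ρs 0 ι * μ ι) * (ρs 0 κ * μ κ)) = c 0 := by linarith
  have hQ11eq : (∑ ι : Fin N, ∑ κ : Fin N,
      K 1 1 (x ι) (x κ) * (ρs 1 ι * μ ι) * (ρs 1 κ * μ κ)) = c 1 := by linarith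
  -- extraction of the dirac for each species
  have key : ∀ i : Fin 2,
      (∑ ι : Fin N, ∑ κ : Fin N, K i i (x ι) (x κ) * (ρs i ι * μ ι) * (ρs i κ * μ κ)) = c i →
      ∃ ι1 : Fin N, ρs i ι1 * μ ι1 = 1 ∧ ∀ κ, κ ≠ ι1 → ρs i κ = 0 := by
    intro i hQ
    have hex : ∃ ι, 0 < ρs i ι * μ ι := by
      by_contra h
      push_neg at h
      have hz : ∀ ι, ρs i ι * μ ι = 0 := fun ι => le_antisymm (h ι) (hnn i ι)
      have hs := hρs.2 i
      rw [Finset.sum_congr rfl fun ι _ => hz ι] at hs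
      simp at hs
    obtain ⟨ι1, hpos⟩ := hex
    have hzero : ∀ κ, κ ≠ ι1 → ρs i κ * μ κ = 0 := by
      intro κ hκ
      by_contra hz
      have hposκ : 0 < ρs i κ * μ κ := lt_of_le_of_ne (hnn i κ) (Ne.symm hz)
      have hstrict : c i < ∑ ι : Fin N, ∑ κ : Fin N,
          K i i (x ι) (x κ) * (ρs i ι * μ ι) * (ρs i κ * μ κ) :=
        quad_gt _ _ _ (hnn i) (hnn i) (hρs.2 i) (hρs.2 i) _ (hgeii i) ι1 κ hpos hposκ
          (hoffii i ι1 κ (Ne.symm hκ))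
      rw [hQ] at hstrict
      exact lt_irrefl _ hstrict
    refine ⟨ι1, ?_, fun κ hκ => ?_⟩
    · have hs := hρs.2 i
      rwa [Finset.sum_eq_single ι1 (fun κ _ hκ => hzero κ hκ)
        (fun h => absurd (Finset.mem_univ _) h)] at hs
    · exact (mul_eq_zero.mp (hzero κ hκ)).resolve_right (hμ κ).ne'
  obtain ⟨ι1, h1, h1z⟩ := key 0 hQ00eq
  obtain ⟨ι2, h2, h2z⟩ := key 1 hQ11eq
  refine ⟨⟨ι1, ι2, h1, h2, h1z, h2z⟩, ?_⟩
  -- second part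
  intro hD12 ι₁ ι₂ ⟨ha1, ha2, ha3, ha4⟩
  by_contra hne
  have hmass0 : ∀ ι, ρs 0 ι * μ ι = if ι = ι₁ then (1:ℝ) else 0 := by
    intro ι
    by_cases h : ι = ι₁
    · subst h; simp [ha1]
    · simp [h, ha3 ι h]
  have hmass1 : ∀ ι, ρs 1 ι * μ ι = if ι = ι₂ then (1:ℝ) else 0 := by
    intro ι
    by_cases h : ι = ι₂
    · subst h; simp [ha2]
    · simp [h, ha4 ι h]
  have hEρs : energyGG x μ K ρs = (1/2) * (c 0 + c 1) + K 0 1 (x ι₁) (x ι₂) := by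
    rw [hE]
    simp only [hmass0, hmass1]
    have q1 := quad_single (fun p q => K 0 0 (x p) (x q)) ι₁ ι₁
    have q2 := quad_single (fun p q => K 0 1 (x p) (x q)) ι₁ ι₂
    have q3 := quad_single (fun p q => K 1 0 (x p) (x q)) ι₂ ι₁
    have q4 := quad_single (fun p q => K 1 1 (x p) (x q)) ι₂ ι₂
    rw [q1, q2, q3, q4, hdiag 0 ι₁, hdiag 1 ι₂, ← hK12, hKsym]
    ring
  have hup2 := hmin (diracPair μ ι₁ ι₁) (diracPair_dist μ hμ ι₁ ι₁)
  rw [hEρs, hEd ι₁ ι₁] at hup2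
  have hxne : x ι₁ ≠ x ι₂ := fun h => hne (hx h)
  have := hD12 (x ι₁) (x ι₂) hxne
  linarith
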